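/- Let V be a real vector space with a negative definite quadratic form Q (i.e. Q(v) < 0 for every v ≠ 0), and let M be a module over the Clifford algebra of Q that is also an ℝ-vector space with compatible scalar actions (IsScalarTower ℝ (CliffordAlgebra Q) M). If ψ ∈ M is nonzero, f ∈ ℝ, and v ∈ V satisfy ι(v) • ψ = f • ψ, then f = 0 and v = 0. -/

import Mathlib

namespace CliffordAlgebra

theorem Q_smul_eq_sq_smul_of_ι_smul_eq_smul {R V M : Type*} [CommRing R] [AddCommGroup V]
    [Module R V] {Q : QuadraticForm R V} [AddCommGroup M] [Module R M]
    [Module (CliffordAlgebra Q) M] [IsScalarTower R (CliffordAlgebra Q) M]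
    {ψ : M} {f : R} {v : V} (h : ι Q v • ψ = f • ψ) : Q v • ψ = f ^ 2 • ψ :=
  calc Q v • ψ = (ι Q v * ι Q v) • ψ := by rw [ι_sq_scalar, algebraMap_smul]
    _ = f ^ 2 • ψ := by rw [mul_smul, h, smul_comm, h, smul_smul, sq]

end CliffordAlgebra

/-- Rigidity over a negative definite quadratic form: if `M` is a module over the Clifford
algebra of `Q` (compatibly an `ℝ`-vector space), `ψ ≠ 0`, and `ι(v) • ψ = f • ψ`, then
`f = 0` and `v = 0`. -/
theorem eq_zero_of_ι_smul_eq_smul {V : Type*} [AddCommGroup V] [Module ℝ V]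
    (Q : QuadraticForm ℝ V) (hQ : ∀ v : V, v ≠ 0 → Q v < 0)
    {M : Type*} [AddCommGroup M] [Module ℝ M] [Module (CliffordAlgebra Q) M]
    [IsScalarTower ℝ (CliffordAlgebra Q) M]
    (ψ : M) (hψ : ψ ≠ 0) (f : ℝ) (v : V)
    (h : CliffordAlgebra.ι Q v • ψ = f • ψ) : f = 0 ∧ v = 0 := by
  have hQf : Q v = f ^ 2 :=
    smul_left_injective ℝ hψ (CliffordAlgebra.Q_smul_eq_sq_smul_of_ι_smul_eq_smul h)
  have hv : v = 0 := by
    by_contra hv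
    exact (hQ v hv).not_ge (hQf ▸ sq_nonneg f)
  subst hv
  exact ⟨pow_eq_zero_iff two_ne_zero |>.mp (by simpa using hQf.symm), rfl⟩
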